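/- arXiv:1012.3182 — 2 statements merged into one kernel-verified Lean document; each statement's English description precedes it below -/
import Mathlib

section
/- Let b₁, …, b_k be an LLL-reduced basis of a lattice L in ℝⁿ. Then for each 1 ≤ i ≤ k: ‖b_i‖² ≤ 2^{k−1} λ_i², where λ_i is the i-th successive minimum of the unit ball with respect to L. -/
noncomputable section

open scoped BigOperators RealInnerProductSpace Pointwise

instance (k : ℕ) : WellFoundedLT (Fin k) := inferInstance

/-- Pack a plain vector into `EuclideanSpace`. -/
def toE {n : ℕ} (x : Fin n → ℝ) : EuclideanSpace ℝ (Fin n) := (WithLp.equiv 2 _).symm x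

/-- `det(L)` for the lattice with basis `b`: the square root of the Gram determinant,
i.e. the `k`-volume of the fundamental parallelepiped. -/
def latticeDet {n k : ℕ} (b : Fin k → EuclideanSpace ℝ (Fin n)) : ℝ :=
  Real.sqrt (Matrix.det (Matrix.of fun i j : Fin k => (⟪b i, b j⟫ : ℝ)))

/-- `λ_i(B, L)`: the `i`-th successive minimum (1-based) of the unit Euclidean ball with
respect to the lattice generated over `ℤ` by `b`. -/
def succMin {n k : ℕ} (b : Fin k → EuclideanSpace ℝ (Fin n)) (i : ℕ) : ℝ :=
  sInf {lam : ℝ | 0 < lam ∧ ∃ v : Fin i → EuclideanSpace ℝ (Fin n),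
    (∀ j, v j ∈ Submodule.span ℤ (Set.range b)) ∧ LinearIndependent ℝ v ∧ ∀ j, ‖v j‖ ≤ lam}

/-- `λ_i(K, L)` for a general `0`-symmetric convex body `K`. -/
def succMinSet {n k : ℕ} (K : Set (EuclideanSpace ℝ (Fin n)))
    (b : Fin k → EuclideanSpace ℝ (Fin n)) (i : ℕ) : ℝ :=
  sInf {lam : ℝ | 0 < lam ∧ ∃ v : Fin i → EuclideanSpace ℝ (Fin n),
    (∀ j, v j ∈ Submodule.span ℤ (Set.range b)) ∧ LinearIndependent ℝ v ∧ ∀ j, v j ∈ lam • K}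

/-- Gram–Schmidt coefficients `μ_{ij} = ⟪b_i, b̂_j⟫ / ‖b̂_j‖²`. -/
def gsMu {n k : ℕ} (b : Fin k → EuclideanSpace ℝ (Fin n)) (i j : Fin k) : ℝ :=
  ⟪b i, InnerProductSpace.gramSchmidt ℝ b j⟫ / ‖InnerProductSpace.gramSchmidt ℝ b j‖ ^ 2

/-- A basis is LLL-reduced if it is size-reduced and satisfies the Lovász condition. -/
def IsLLLReduced {n k : ℕ} (b : Fin k → EuclideanSpace ℝ (Fin n)) : Prop :=
  (∀ i j : Fin k, j < i → |gsMu b i j| ≤ 1 / 2) ∧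
  (∀ i j : Fin k, (j : ℕ) + 1 = (i : ℕ) →
    3 / 4 * ‖InnerProductSpace.gramSchmidt ℝ b j‖ ^ 2 ≤
      ‖InnerProductSpace.gramSchmidt ℝ b i‖ ^ 2 + gsMu b i j ^ 2 * ‖InnerProductSpace.gramSchmidt ℝ b j‖ ^ 2)

/-- The Hermite constant `γ_k`: the supremum over full-rank lattices in `ℝ^k` of
`λ₁(B,L)² / (det L)^{2/k}`. -/
def hermiteConstant (k : ℕ) : ℝ :=
  sSup {r : ℝ | ∃ b : Fin k → EuclideanSpace ℝ (Fin k), LinearIndependent ℝ b ∧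
    r = succMin b 1 ^ 2 / latticeDet b ^ ((2 : ℝ) / k)}

/-- `x ∈ ℤⁿ`. -/
def IsIntegerVec {n : ℕ} (x : EuclideanSpace ℝ (Fin n)) : Prop :=
  ∀ j, ∃ z : ℤ, x j = (z : ℝ)

/-- The greatest common divisor of all `m × m` minors of an `m × n` integer matrix. -/
def minorGcd {m n : ℕ} (A : Matrix (Fin m) (Fin n) ℤ) : ℤ :=
  Finset.gcd (Finset.univ.filter fun s : Finset (Fin n) => s.card = m)
    fun s => if h : s.card = m then
      (A.submatrix id fun j => ((s.orderIsoOfFin h) j : Fin n)).det else 0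

/-- `c` is a `ℤ`-basis of the lattice `L_A^⊥ = {x ∈ ℤⁿ : A x = 0}`. -/
def IsKernelZBasis {m n k : ℕ} (A : Matrix (Fin m) (Fin n) ℤ)
    (c : Fin k → EuclideanSpace ℝ (Fin n)) : Prop :=
  LinearIndependent ℝ c ∧ (∀ i, IsIntegerVec (c i)) ∧
  (∀ i, (A.map (Int.cast : ℤ → ℝ)).mulVec (fun j => c i j) = 0) ∧
  (∀ x : Fin n → ℤ, A.mulVec x = 0 →
    toE (fun j => (x j : ℝ)) ∈ Submodule.span ℤ (Set.range c))

/-- The cone `C` generated by the columns of `A`. -/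
def colCone {m n : ℕ} (A : Matrix (Fin m) (Fin n) ℤ) : Set (Fin m → ℝ) :=
  {y | ∃ μ : Fin n → ℝ, (∀ i, 0 ≤ μ i) ∧ y = ∑ i, μ i • fun r => (A r i : ℝ)}

/-- `v = v₁ + ⋯ + v_n`, the sum of the columns of `A` (as a real vector). -/
def colSum {m n : ℕ} (A : Matrix (Fin m) (Fin n) ℤ) : Fin m → ℝ :=
  fun r => ∑ i, (A r i : ℝ)


/-!
The Gram–Schmidt vectors control both sides. A lattice vector outside the span of
`b₀, …, b_{i-1}` has a nonzero integer coordinate at some largest index `j ≥ i`, so its inner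
product with `b̂ⱼ` is a nonzero integer multiple of `‖b̂ⱼ‖²` and Cauchy–Schwarz gives
`‖b̂ⱼ‖ ≤ ‖v‖`; among `i + 1` independent lattice vectors one lies outside that span, hence
`λ_{i+1} ≥ min_{j ≥ i} ‖b̂ⱼ‖`. On the other side, the Lovász condition together with
`|μ_{ij}| ≤ 1/2` gives `‖b̂ⱼ‖² ≤ 2 ‖b̂_{j+1}‖²`, and expanding `bᵢ` in the orthogonal basis
`b̂` gives `‖bᵢ‖² ≤ 2^i ‖b̂ᵢ‖² ≤ 2^j ‖b̂ⱼ‖²` for every `j ≥ i`.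
-/

open InnerProductSpace Finset

lemma Submodule.exists_notMem_span_finset_of_card_lt {K M : Type*} [DivisionRing K]
    [AddCommGroup M] [Module K M] {m : ℕ} {v : Fin m → M} (hv : LinearIndependent K v)
    (s : Finset M) (hs : s.card < m) : ∃ t, v t ∉ Submodule.span K (s : Set M) := by
  by_contra! hall
  have hle : Submodule.span K (Set.range v) ≤ Submodule.span K (s : Set M) :=
    Submodule.span_le.2 (Set.range_subset_iff.2 hall)
  have := Submodule.finrank_mono hle
  rw [finrank_span_eq_card hv, Fintype.card_fin] at this
  exact absurd (this.trans (finrank_span_finset_le_card s)) hs.not_ge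

section GramSchmidt

variable {E : Type*} [NormedAddCommGroup E] [InnerProductSpace ℝ E]

lemma norm_sum_smul_sq_of_pairwise_orthogonal {ι : Type*} {w : ι → E}
    (hw : Pairwise fun a b => ⟪w a, w b⟫ = 0) (s : Finset ι) (c : ι → ℝ) :
    ‖∑ j ∈ s, c j • w j‖ ^ 2 = ∑ j ∈ s, c j ^ 2 * ‖w j‖ ^ 2 := by
  rw [← real_inner_self_eq_norm_sq, sum_inner]
  refine sum_congr rfl fun j hj => ?_
  rw [inner_sum, sum_eq_single_of_mem j hj fun l _ hlj => by
    rw [real_inner_smul_left, real_inner_smul_right, hw hlj.symm, mul_zero, mul_zero]]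
  rw [real_inner_smul_left, real_inner_smul_right, real_inner_self_eq_norm_sq]
  ring

variable {k : ℕ} (b : Fin k → E)

lemma inner_gramSchmidt_eq_norm_sq (i : Fin k) :
    ⟪b i, gramSchmidt ℝ b i⟫ = ‖gramSchmidt ℝ b i‖ ^ 2 := by
  conv_lhs => rw [gramSchmidt_def'' ℝ b i]
  rw [inner_add_left, sum_inner, real_inner_self_eq_norm_sq, sum_eq_zero, add_zero]
  intro j hj
  rw [real_inner_smul_left, gramSchmidt_orthogonal ℝ b (mem_Iio.1 hj).ne, mul_zero]

lemma exists_norm_gramSchmidt_le_of_notMem_span {v : E}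
    (hv : v ∈ Submodule.span ℤ (Set.range b)) {i : Fin k}
    (hvi : v ∉ Submodule.span ℝ (b '' Set.Iio i)) :
    ∃ j, i ≤ j ∧ ‖gramSchmidt ℝ b j‖ ≤ ‖v‖ := by
  obtain ⟨z, rfl⟩ := (Submodule.mem_span_range_iff_exists_fun ℤ).1 hv
  have hzi : ∃ j, z j ≠ 0 ∧ i ≤ j := by
    by_contra! hno
    refine hvi (Submodule.sum_mem _ fun j _ => ?_)
    by_cases hzj : z j = 0
    · simp [hzj]
    · rw [← Int.cast_smul_eq_zsmul ℝ]
      exact Submodule.smul_mem _ _ (Submodule.subset_span ⟨j, hno j hzj, rfl⟩)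
  obtain ⟨ja, hja, hia⟩ := hzi
  have hS : {j | z j ≠ 0}.toFinset.Nonempty := ⟨ja, by simpa using hja⟩
  set j₀ := {j | z j ≠ 0}.toFinset.max' hS
  have hz₀ : z j₀ ≠ 0 := Set.mem_toFinset.1 (max'_mem _ hS)
  have hgt : ∀ l, j₀ < l → z l = 0 := fun l hl => by
    by_contra hzl
    exact (le_max' _ l (by simpa using hzl)).not_gt hl
  have hinner : ⟪∑ j, z j • b j, gramSchmidt ℝ b j₀⟫ = z j₀ * ‖gramSchmidt ℝ b j₀‖ ^ 2 := by
    rw [sum_inner, sum_eq_single j₀ (fun l _ hlj => ?_) (by simp)]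
    · rw [← Int.cast_smul_eq_zsmul ℝ, real_inner_smul_left, inner_gramSchmidt_eq_norm_sq]
    · rcases hlj.lt_or_gt with h | h
      · rw [← Int.cast_smul_eq_zsmul ℝ, real_inner_smul_left, real_inner_comm,
          gramSchmidt_inv_triangular ℝ b h, mul_zero]
      · rw [hgt l h, zero_smul, inner_zero_left]
  refine ⟨j₀, hia.trans (le_max' _ ja (by simpa using hja)), ?_⟩
  have hcs := abs_real_inner_le_norm (∑ j, z j • b j) (gramSchmidt ℝ b j₀)
  have hz₁ : (1 : ℝ) ≤ |(z j₀ : ℝ)| := by exact_mod_cast Int.one_le_abs hz₀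
  rw [hinner, abs_mul, abs_of_nonneg (sq_nonneg ‖gramSchmidt ℝ b j₀‖)] at hcs
  have hsq := (le_mul_of_one_le_left (sq_nonneg _) hz₁).trans hcs
  by_contra! hlt
  nlinarith [mul_lt_mul_of_pos_right hlt ((norm_nonneg _).trans_lt hlt)]

end GramSchmidt

section SuccessiveMinima

variable {n k : ℕ} (b : Fin k → EuclideanSpace ℝ (Fin n))

lemma le_succMin (hb : LinearIndependent ℝ b) {m : ℕ} (hm : m ≤ k) {c : ℝ}
    (h : ∀ v : Fin m → EuclideanSpace ℝ (Fin n), (∀ t, v t ∈ Submodule.span ℤ (Set.range b)) →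
      LinearIndependent ℝ v → ∃ t, c ≤ ‖v t‖) :
    c ≤ succMin b m := by
  refine le_csInf ⟨1 + ∑ j, ‖b j‖, ?_, fun t => b (Fin.castLE hm t),
    fun t => Submodule.subset_span ⟨_, rfl⟩, hb.comp _ (Fin.castLE_injective hm), fun t => ?_⟩ ?_
  · positivity
  · have := single_le_sum (fun j _ => norm_nonneg (b j)) (mem_univ (Fin.castLE hm t))
    linarith
  · rintro lam ⟨-, v, hvL, hv, hvlam⟩
    obtain ⟨t, ht⟩ := h v hvL hv
    exact ht.trans (hvlam t)

lemma exists_norm_gramSchmidt_le_succMin (hb : LinearIndependent ℝ b) (i : Fin k) :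
    ∃ j, i ≤ j ∧ ‖gramSchmidt ℝ b j‖ ≤ succMin b ((i : ℕ) + 1) := by
  classical
  obtain ⟨j, hj, hmin⟩ := exists_min_image {j | i ≤ j}.toFinset (‖gramSchmidt ℝ b ·‖)
    ⟨i, by simp⟩
  refine ⟨j, by simpa using hj, le_succMin b hb i.isLt fun v hvL hv => ?_⟩
  have hcard : ((Iio i).image b).card < (i : ℕ) + 1 :=
    Nat.lt_succ_of_le (card_image_le.trans (Fin.card_Iio i).le)
  obtain ⟨t, ht⟩ := Submodule.exists_notMem_span_finset_of_card_lt hv _ hcard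
  obtain ⟨l, hil, hl⟩ := exists_norm_gramSchmidt_le_of_notMem_span b (hvL t)
    (by simpa [coe_image] using ht)
  exact ⟨t, (hmin l (by simpa using hil)).trans hl⟩

end SuccessiveMinima

lemma norm_sq_eq_norm_gramSchmidt_sq_add_sum {n k : ℕ}
    (b : Fin k → EuclideanSpace ℝ (Fin n)) (i : Fin k) :
    ‖b i‖ ^ 2 = ‖gramSchmidt ℝ b i‖ ^ 2
      + ∑ j ∈ Iio i, gsMu b i j ^ 2 * ‖gramSchmidt ℝ b j‖ ^ 2 := by
  have hb : b i = gramSchmidt ℝ b i + ∑ j ∈ Iio i, gsMu b i j • gramSchmidt ℝ b j := by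
    conv_lhs => rw [gramSchmidt_def'' ℝ b i]
    simp only [gsMu, real_inner_comm, RCLike.ofReal_real_eq_id, id]
  have horth : ⟪gramSchmidt ℝ b i, ∑ j ∈ Iio i, gsMu b i j • gramSchmidt ℝ b j⟫ = 0 := by
    rw [inner_sum]
    refine sum_eq_zero fun j hj => ?_
    rw [real_inner_smul_right, gramSchmidt_orthogonal ℝ b (mem_Iio.1 hj).ne', mul_zero]
  rw [hb, norm_add_sq_real, horth,
    norm_sum_smul_sq_of_pairwise_orthogonal (gramSchmidt_pairwise_orthogonal ℝ b)]
  ring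

lemma Fin.sum_Iio_two_pow_sub_one_sub {k : ℕ} (i : Fin k) :
    ∑ j ∈ Iio i, (2 : ℝ) ^ ((i : ℕ) - 1 - j) = 2 ^ (i : ℕ) - 1 := by
  have hval : ∑ j ∈ Iio i, (2 : ℝ) ^ ((i : ℕ) - 1 - j)
      = ∑ t ∈ range i, (2 : ℝ) ^ ((i : ℕ) - 1 - t) := by
    rw [← Nat.Iio_eq_range, ← Fin.map_valEmbedding_Iio, sum_map]
    rfl
  rw [hval, sum_range_reflect (fun j => (2 : ℝ) ^ j), geom_sum_eq (by norm_num)]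
  norm_num

namespace IsLLLReduced

variable {n k : ℕ} {b : Fin k → EuclideanSpace ℝ (Fin n)}

lemma gsMu_sq_le (hLLL : IsLLLReduced b) {i j : Fin k} (hji : j < i) :
    gsMu b i j ^ 2 ≤ 1 / 4 := by
  have := pow_le_pow_left₀ (abs_nonneg _) (hLLL.1 i j hji) 2
  rwa [sq_abs, div_pow, one_pow, show (2 : ℝ) ^ 2 = 4 by norm_num] at this

lemma norm_gramSchmidt_sq_le_two_mul (hLLL : IsLLLReduced b) {j l : Fin k}
    (h : (j : ℕ) + 1 = l) :
    ‖gramSchmidt ℝ b j‖ ^ 2 ≤ 2 * ‖gramSchmidt ℝ b l‖ ^ 2 := by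
  have hmu := hLLL.gsMu_sq_le (j := j) (i := l) (by rw [Fin.lt_def]; omega)
  nlinarith [hLLL.2 l j h, mul_le_mul_of_nonneg_right hmu (sq_nonneg ‖gramSchmidt ℝ b j‖)]

lemma norm_gramSchmidt_sq_le_two_pow_mul (hLLL : IsLLLReduced b) {j l : Fin k} (h : j ≤ l) :
    ‖gramSchmidt ℝ b j‖ ^ 2 ≤ 2 ^ ((l : ℕ) - j) * ‖gramSchmidt ℝ b l‖ ^ 2 := by
  obtain ⟨d, hd⟩ := Nat.exists_eq_add_of_le (Fin.le_def.1 h)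
  induction d generalizing l with
  | zero => simp [Fin.ext hd.symm]
  | succ d ih =>
    set l' : Fin k := ⟨j + d, by omega⟩
    calc ‖gramSchmidt ℝ b j‖ ^ 2 ≤ 2 ^ d * ‖gramSchmidt ℝ b l'‖ ^ 2 := by
          simpa [l'] using ih (l := l') (Fin.le_def.2 (by simp [l'])) rfl
      _ ≤ 2 ^ d * (2 * ‖gramSchmidt ℝ b l‖ ^ 2) := by
          gcongr; exact hLLL.norm_gramSchmidt_sq_le_two_mul (by simp [l']; omega)
      _ = 2 ^ ((l : ℕ) - j) * ‖gramSchmidt ℝ b l‖ ^ 2 := by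
          rw [hd, Nat.add_sub_cancel_left, pow_succ]; ring

lemma norm_sq_le_two_pow_mul_norm_gramSchmidt_sq (hLLL : IsLLLReduced b) (i : Fin k) :
    ‖b i‖ ^ 2 ≤ 2 ^ (i : ℕ) * ‖gramSchmidt ℝ b i‖ ^ 2 := by
  have hterm : ∀ j ∈ Iio i, gsMu b i j ^ 2 * ‖gramSchmidt ℝ b j‖ ^ 2 ≤
      2 ^ ((i : ℕ) - 1 - j) * ‖gramSchmidt ℝ b i‖ ^ 2 := fun j hj => by
    have hji := mem_Iio.1 hj
    have hpow : (2 : ℝ) ^ ((i : ℕ) - j) = 2 * 2 ^ ((i : ℕ) - 1 - j) := by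
      rw [← pow_succ']; congr 1; rw [Fin.lt_def] at hji; omega
    calc gsMu b i j ^ 2 * ‖gramSchmidt ℝ b j‖ ^ 2
        ≤ 1 / 4 * (2 ^ ((i : ℕ) - j) * ‖gramSchmidt ℝ b i‖ ^ 2) :=
          mul_le_mul (hLLL.gsMu_sq_le hji) (hLLL.norm_gramSchmidt_sq_le_two_pow_mul hji.le)
            (sq_nonneg _) (by norm_num)
      _ = 2 ^ ((i : ℕ) - 1 - j) * ‖gramSchmidt ℝ b i‖ ^ 2 / 2 := by rw [hpow]; ring
      _ ≤ _ := half_le_self (by positivity)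
  calc ‖b i‖ ^ 2 ≤ ‖gramSchmidt ℝ b i‖ ^ 2
        + ∑ j ∈ Iio i, 2 ^ ((i : ℕ) - 1 - j) * ‖gramSchmidt ℝ b i‖ ^ 2 := by
        rw [norm_sq_eq_norm_gramSchmidt_sq_add_sum]
        exact add_le_add le_rfl (sum_le_sum hterm)
    _ = 2 ^ (i : ℕ) * ‖gramSchmidt ℝ b i‖ ^ 2 := by
        rw [← sum_mul, Fin.sum_Iio_two_pow_sub_one_sub]; ring

end IsLLLReduced

/-- Lemma 2, inequality (13): for an LLL-reduced basis,
`‖b_i‖² ≤ 2^{k−1} λ_i²`. -/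
theorem norm_sq_le_two_pow_mul_succMin_sq {n k : ℕ}
    (b : Fin k → EuclideanSpace ℝ (Fin n)) (hb : LinearIndependent ℝ b)
    (hLLL : IsLLLReduced b) (i : Fin k) :
    ‖b i‖ ^ 2 ≤ 2 ^ (k - 1) * succMin b ((i : ℕ) + 1) ^ 2 := by
  obtain ⟨j, hij, hj⟩ := exists_norm_gramSchmidt_le_succMin b hb i
  calc ‖b i‖ ^ 2 ≤ 2 ^ (i : ℕ) * ‖gramSchmidt ℝ b i‖ ^ 2 :=
        hLLL.norm_sq_le_two_pow_mul_norm_gramSchmidt_sq i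
    _ ≤ 2 ^ (i : ℕ) * (2 ^ ((j : ℕ) - i) * ‖gramSchmidt ℝ b j‖ ^ 2) := by
        gcongr; exact hLLL.norm_gramSchmidt_sq_le_two_pow_mul hij
    _ = 2 ^ (j : ℕ) * ‖gramSchmidt ℝ b j‖ ^ 2 := by
        rw [← mul_assoc, ← pow_add, Nat.add_sub_cancel' (Fin.le_def.1 hij)]
    _ ≤ 2 ^ (k - 1) * succMin b ((i : ℕ) + 1) ^ 2 := by
        gcongr
        · norm_num
        · omega

end
end

section
/- Let a ∈ ℤⁿ with gcd(a₁,…,a_n) = 1. Then the lattice L⊥ = {x ∈ ℤⁿ : aᵀx = 0} has rank n−1 and determinant det(L⊥) = ‖a‖ (the Euclidean norm of a). -/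
/-!
By Bézout there is `z ∈ ℤⁿ` with `a ⬝ᵥ z = 1`, so `ℤⁿ = L⊥ ⊕ ℤ z` and `L⊥` is free of rank
`n - 1`. For a basis `b` of `L⊥`, the family `(b, z)` is a basis of `ℤⁿ`, so `det (b, z) = ±1`.
Since `a - (a ⬝ᵥ a) z ∈ L⊥`, replacing `z` by `a` multiplies this determinant by `a ⬝ᵥ a`; and
since `a ⟂ L⊥`, the Gram determinant of `(b, a)` is `det (b bᵀ) · (a ⬝ᵥ a)`. Comparing the two
gives `det (b bᵀ) = a ⬝ᵥ a = ‖a‖²`. Any other basis of `L⊥` differs from `b` by a unimodular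
matrix, so it has the same Gram determinant.
-/

noncomputable section

open scoped BigOperators RealInnerProductSpace Pointwise

/-- `c` is a `ℤ`-basis of the lattice `{x ∈ ℤⁿ : aᵀx = 0}`. -/
def IsOrthKernelZBasis {n k : ℕ} (a : Fin n → ℤ)
    (c : Fin k → EuclideanSpace ℝ (Fin n)) : Prop :=
  LinearIndependent ℝ c ∧ (∀ i, IsIntegerVec (c i)) ∧
  (∀ i, ∑ j, (a j : ℝ) * c i j = 0) ∧
  (∀ x : Fin n → ℤ, (∑ j, a j * x j = 0) →
    toE (fun j => (x j : ℝ)) ∈ Submodule.span ℤ (Set.range c))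


open Matrix Module Submodule

theorem Matrix.gram_sum_smul {𝕜 E ι κ : Type*} [RCLike 𝕜] [NormedAddCommGroup E]
    [InnerProductSpace 𝕜 E] [Fintype ι] [Fintype κ] (T : Matrix κ ι 𝕜) (v : κ → E) :
    gram 𝕜 (fun j => ∑ i, T i j • v i) = Tᴴ * gram 𝕜 v * T := by
  ext j l
  simp only [gram_apply, sum_inner, inner_sum, inner_smul_left, inner_smul_right, mul_apply,
    conjTranspose_apply, RCLike.star_def, Finset.sum_mul, Finset.mul_sum]
  refine Finset.sum_congr rfl fun i _ => Finset.sum_congr rfl fun k _ => by ring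

theorem det_gram_eq_of_span_eq {E ι : Type*} [NormedAddCommGroup E] [InnerProductSpace ℝ E]
    [Fintype ι] [DecidableEq ι] {v w : ι → E} (hv : LinearIndependent ℤ v)
    (hw : LinearIndependent ℤ w) (h : span ℤ (Set.range v) = span ℤ (Set.range w)) :
    (gram ℝ v).det = (gram ℝ w).det := by
  let ev := Basis.span hv
  let ew := (Basis.span hw).map (LinearEquiv.ofEq _ _ h.symm)
  let P := ev.toMatrix ew
  have hw_eq : w = fun j => ∑ i, (P.map (Int.cast : ℤ → ℝ)) i j • v i := by
    funext j
    have := congrArg Subtype.val (ev.sum_toMatrix_smul_self ew j)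
    simpa [ev, ew, P, Basis.span_apply, Int.cast_smul_eq_zsmul] using this.symm
  have hP : P.det ^ 2 = 1 := Int.isUnit_sq (by simpa [Basis.det_apply] using ev.isUnit_det ew)
  have hPℝ : ((P.map (Int.cast : ℤ → ℝ)).det) ^ 2 = 1 := by
    rw [← Int.cast_det]; exact_mod_cast hP
  rw [hw_eq, gram_sum_smul, det_mul, det_mul, det_conjTranspose, star_trivial]
  linear_combination -(gram ℝ v).det * hPℝ

theorem AlternatingMap.map_update_eq_mul {R M κ : Type*} [CommRing R] [AddCommGroup M]
    [Module R M] [DecidableEq κ] (ψ : M [⋀^κ]→ₗ[R] R) {φ : M →ₗ[R] R} {u : κ → M} {r : κ}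
    (hr : φ (u r) = 1) (hker : LinearMap.ker φ ≤ span R (u '' {r}ᶜ)) (w : M) :
    ψ (Function.update u r w) = φ w * ψ u := by
  let L := ψ.toMultilinearMap.toLinearMap u r
  have hL : span R (u '' {r}ᶜ) ≤ LinearMap.ker L := by
    rw [span_le]
    rintro _ ⟨i, hi, rfl⟩
    exact ψ.map_eq_zero_of_eq _ (i := i) (j := r) (by simp [Function.update_of_ne hi]) hi
  have hw : w - φ w • u r ∈ LinearMap.ker φ := by simp [hr]
  have hLw : L (w - φ w • u r) = 0 := hL (hker hw)
  rw [map_sub, map_smul, sub_eq_zero] at hLw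
  simpa [L] using hLw

theorem Matrix.of_mul_transpose_of_apply {R ι κ μ : Type*} [Mul R] [AddCommMonoid R] [Fintype ι]
    (v : κ → ι → R) (w : μ → ι → R) (i : κ) (j : μ) : (of v * (of w)ᵀ) i j = v i ⬝ᵥ w j :=
  rfl

theorem det_mul_transpose_sum_elim_of_orthogonal {R ι κ : Type*} [CommRing R] [Fintype ι]
    [Fintype κ] [DecidableEq κ] {b : κ → ι → R} {a : ι → R} (h : ∀ i, b i ⬝ᵥ a = 0) :
    (of (Sum.elim b fun _ : Fin 1 => a) * (of (Sum.elim b fun _ : Fin 1 => a))ᵀ).det =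
      (of b * (of b)ᵀ).det * a ⬝ᵥ a := by
  have hblocks : of (Sum.elim b fun _ : Fin 1 => a) * (of (Sum.elim b fun _ : Fin 1 => a))ᵀ =
      fromBlocks (of b * (of b)ᵀ) 0 0 (of fun _ _ => a ⬝ᵥ a) := by
    ext (i | i) (j | j) <;> simp [of_mul_transpose_of_apply, h, dotProduct_comm a]
  rw [hblocks, det_fromBlocks_zero₁₂, det_unique (of fun _ _ : Fin 1 => a ⬝ᵥ a), of_apply]

theorem det_mul_transpose_eq_basis_det_sq {R ι κ : Type*} [CommRing R] [Fintype ι]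
    [Fintype κ] [DecidableEq ι] [DecidableEq κ] (e : κ ≃ ι) (v : κ → ι → R) :
    (of v * (of v)ᵀ).det = ((Pi.basisFun R ι).reindex e.symm).det v ^ 2 := by
  have : of v * (of v)ᵀ = (((Pi.basisFun R ι).reindex e.symm).toMatrix v)ᵀ *
      ((Pi.basisFun R ι).reindex e.symm).toMatrix v := by
    ext i j
    simp [mul_apply, Basis.toMatrix_apply, ← e.sum_comp]
  rw [this, det_mul, det_transpose, Basis.det_apply, sq]

section OrthLattice

variable {ι : Type*} [Fintype ι]

def orthLattice (a : ι → ℤ) : Submodule ℤ (ι → ℤ) := LinearMap.ker (dotProductBilin ℤ ℤ a)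

variable {a : ι → ℤ}

@[simp]
theorem mem_orthLattice {x : ι → ℤ} : x ∈ orthLattice a ↔ a ⬝ᵥ x = 0 := by
  simp [orthLattice]

theorem exists_dotProduct_eq_one (h : Finset.univ.gcd a = 1) : ∃ z, a ⬝ᵥ z = 1 := by
  obtain ⟨g, hg⟩ := Finset.gcd_eq_sum_mul Finset.univ a
  exact ⟨g, by rw [dotProduct, ← hg, h]⟩

variable {z : ι → ℤ}

theorem dotProduct_self_ne_zero_of_dotProduct_eq_one (hz : a ⬝ᵥ z = 1) : a ⬝ᵥ a ≠ 0 := by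
  rw [Ne, dotProduct_self_eq_zero]
  rintro rfl
  simp at hz

theorem orthLattice_sup_span_singleton (hz : a ⬝ᵥ z = 1) : orthLattice a ⊔ span ℤ {z} = ⊤ := by
  refine eq_top_iff.mpr fun x _ => ?_
  rw [← sub_add_cancel x ((a ⬝ᵥ x) • z)]
  refine add_mem_sup ?_ (smul_mem _ _ (mem_span_singleton_self z))
  simp only [mem_orthLattice, dotProduct_sub, dotProduct_smul, hz, smul_eq_mul, mul_one, sub_self]

theorem finrank_orthLattice (hz : a ⬝ᵥ z = 1) :
    finrank ℤ (orthLattice a) = Fintype.card ι - 1 := by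
  have hsurj : Function.Surjective (dotProductBilin ℤ ℤ a) := fun t =>
    ⟨t • z, by simp only [dotProductBilin_apply_apply, dotProduct_smul, hz, smul_eq_mul, mul_one]⟩
  have h := (LinearMap.ker (dotProductBilin ℤ ℤ a)).finrank_quotient_add_finrank
  rw [((dotProductBilin ℤ ℤ a).quotKerEquivOfSurjective hsurj).finrank_eq,
    finrank_fintype_fun_eq_card, finrank_self] at h
  exact (Nat.sub_eq_of_eq_add' h.symm).symm

end OrthLattice

section Basis

variable {m : ℕ} {a z : Fin (m + 1) → ℤ}

theorem exists_span_eq_orthLattice (hz : a ⬝ᵥ z = 1) :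
    ∃ b : Fin m → Fin (m + 1) → ℤ, span ℤ (Set.range b) = orthLattice a := by
  let bK := finBasisOfFinrankEq ℤ (orthLattice a) (n := m) (by simp [finrank_orthLattice hz])
  refine ⟨(orthLattice a).subtype ∘ bK, ?_⟩
  rw [Set.range_comp, ← map_span, bK.span_eq, Submodule.map_top, range_subtype]

variable {b : Fin m → Fin (m + 1) → ℤ} (B : Basis (Fin m ⊕ Fin 1) ℤ (Fin (m + 1) → ℤ))

theorem isUnit_basis_det_sum_elim (hz : a ⬝ᵥ z = 1) (hb : span ℤ (Set.range b) = orthLattice a) :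
    IsUnit (B.det (Sum.elim b fun _ => z)) := by
  have hspan : span ℤ (Set.range (Sum.elim b fun _ : Fin 1 => z)) = ⊤ := by
    rw [eq_top_iff, ← orthLattice_sup_span_singleton hz, ← hb, Set.Sum.elim_range, span_union]
    exact sup_le_sup_left (span_mono (by simp)) _
  exact B.is_basis_iff_det.mp
    ⟨linearIndependent_of_top_le_span_of_card_eq_finrank hspan.ge (by simp), hspan⟩

theorem basis_det_sum_elim_eq (hz : a ⬝ᵥ z = 1) (hb : span ℤ (Set.range b) = orthLattice a)
    (w : Fin (m + 1) → ℤ) :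
    B.det (Sum.elim b fun _ => w) = a ⬝ᵥ w * B.det (Sum.elim b fun _ => z) := by
  have hw : Function.update (Sum.elim b fun _ : Fin 1 => z) (.inr 0) w =
      Sum.elim b fun _ : Fin 1 => w := by
    funext i
    rcases i with i | i
    · simp
    · simp [Fin.fin_one_eq_zero i]
  rw [← hw]
  refine B.det.map_update_eq_mul (φ := dotProductBilin ℤ ℤ a) (by simp [hz]) ?_ w
  rw [← orthLattice, ← hb]
  exact span_mono (by rintro _ ⟨i, rfl⟩; exact ⟨.inl i, by simp, rfl⟩)

theorem det_mul_transpose_eq_dotProduct_self (hz : a ⬝ᵥ z = 1)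
    (hb : span ℤ (Set.range b) = orthLattice a) : (of b * (of b)ᵀ).det = a ⬝ᵥ a := by
  let B := (Pi.basisFun ℤ (Fin (m + 1))).reindex finSumFinEquiv.symm
  have horth : ∀ i, b i ⬝ᵥ a = 0 := fun i => by
    rw [dotProduct_comm, ← mem_orthLattice, ← hb]
    exact subset_span ⟨i, rfl⟩
  have key : (of b * (of b)ᵀ).det * a ⬝ᵥ a = B.det (Sum.elim b fun _ => a) ^ 2 := by
    rw [← det_mul_transpose_sum_elim_of_orthogonal horth]
    exact det_mul_transpose_eq_basis_det_sq finSumFinEquiv _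
  rw [basis_det_sum_elim_eq B hz hb, mul_pow, Int.isUnit_sq (isUnit_basis_det_sum_elim B hz hb),
    mul_one, sq] at key
  exact mul_right_cancel₀ (dotProduct_self_ne_zero_of_dotProduct_eq_one hz) key

end Basis

def intCastEuclidean {n : ℕ} : (Fin n → ℤ) →ₗ[ℤ] EuclideanSpace ℝ (Fin n) :=
  (WithLp.linearEquiv 2 ℤ (Fin n → ℝ)).symm.toLinearMap ∘ₗ
    (Int.castAddHom ℝ).toIntLinearMap.compLeft (Fin n)

theorem intCastEuclidean_eq_toE {n : ℕ} (x : Fin n → ℤ) :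
    intCastEuclidean x = toE fun j => (x j : ℝ) := rfl

@[simp]
theorem intCastEuclidean_apply {n : ℕ} (x : Fin n → ℤ) (j : Fin n) :
    intCastEuclidean x j = x j := rfl

theorem gram_intCastEuclidean {n : ℕ} {κ : Type*} (b : κ → Fin n → ℤ) :
    gram ℝ (intCastEuclidean ∘ b) = (of b * (of b)ᵀ).map (Int.cast : ℤ → ℝ) := by
  ext i j
  simp [gram_apply, mul_apply, PiLp.inner_apply, mul_comm]

section IsOrthKernelZBasis

variable {n k : ℕ} {a : Fin n → ℤ}

theorem IsOrthKernelZBasis.span_eq {c : Fin k → EuclideanSpace ℝ (Fin n)}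
    (hc : IsOrthKernelZBasis a c) :
    span ℤ (Set.range c) = (orthLattice a).map intCastEuclidean := by
  obtain ⟨-, hint, horth, hspan⟩ := hc
  refine le_antisymm (span_le.mpr ?_) (map_le_iff_le_comap.mpr fun x hx => hspan x hx)
  rintro _ ⟨i, rfl⟩
  choose x hx using hint i
  have hc : intCastEuclidean x = c i := by ext j; simp [hx j]
  refine ⟨x, mem_orthLattice.mpr ?_, hc⟩
  have := horth i
  simp only [hx] at this
  exact_mod_cast this

theorem isOrthKernelZBasis_intCastEuclidean {b : Fin k → Fin n → ℤ}
    (hli : LinearIndependent ℝ (intCastEuclidean ∘ b)) (hb : span ℤ (Set.range b) = orthLattice a) :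
    IsOrthKernelZBasis a (intCastEuclidean ∘ b) := by
  refine ⟨hli, fun i j => ⟨b i j, rfl⟩, fun i => ?_, fun x hx => ?_⟩
  · have : a ⬝ᵥ b i = 0 := mem_orthLattice.mp (hb ▸ subset_span ⟨i, rfl⟩)
    simpa [dotProduct] using congrArg (Int.cast : ℤ → ℝ) this
  · rw [← intCastEuclidean_eq_toE, Set.range_comp, ← map_span, hb]
    exact mem_map_of_mem (mem_orthLattice.mpr hx)

end IsOrthKernelZBasis

/-- for `a ∈ ℤⁿ` with `gcd(a) = 1`, the lattice
`L⊥ = {x ∈ ℤⁿ : aᵀx = 0}` has rank `n − 1` and determinant `‖a‖`. -/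
theorem kernel_lattice_of_vector {n : ℕ} (a : Fin n → ℤ) (hgcd : Finset.univ.gcd a = 1) :
    (∃ c : Fin (n - 1) → EuclideanSpace ℝ (Fin n), IsOrthKernelZBasis a c) ∧
    (∀ c : Fin (n - 1) → EuclideanSpace ℝ (Fin n), IsOrthKernelZBasis a c →
      latticeDet c = Real.sqrt (∑ j, (a j : ℝ) ^ 2)) := by
  obtain ⟨z, hz⟩ := exists_dotProduct_eq_one hgcd
  obtain ⟨m, rfl⟩ : ∃ m, n = m + 1 := Nat.exists_eq_succ_of_ne_zero (by rintro rfl; simp at hz)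
  obtain ⟨b, hb⟩ := exists_span_eq_orthLattice hz
  have hdet : (gram ℝ (intCastEuclidean ∘ b)).det = ((a ⬝ᵥ a : ℤ) : ℝ) := by
    rw [gram_intCastEuclidean, ← Int.cast_det, det_mul_transpose_eq_dotProduct_self hz hb]
  have hli : LinearIndependent ℝ (intCastEuclidean ∘ b) := by
    refine linearIndependent_of_det_gram_ne_zero ?_
    rw [hdet, Int.cast_ne_zero]
    exact dotProduct_self_ne_zero_of_dotProduct_eq_one hz
  have hc₀ := isOrthKernelZBasis_intCastEuclidean hli hb
  refine ⟨⟨_, hc₀⟩, fun c hc => ?_⟩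
  rw [latticeDet, show ∑ j, (a j : ℝ) ^ 2 = ((a ⬝ᵥ a : ℤ) : ℝ) by push_cast [dotProduct, sq]; rfl,
    ← hdet]
  exact congrArg Real.sqrt (det_gram_eq_of_span_eq (hc.1.restrict_scalars' ℤ)
    (hli.restrict_scalars' ℤ) (hc.span_eq.trans hc₀.span_eq.symm))

end
end
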